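/- Let η > 0 and let k_η(z) = (1/(4π) + η/(12π)) − (η/(8π))·√((1−z)/2). Then for each natural number ℓ, the quantity λ_ℓ(η) = 2π ∫_{-1}^{1} k_η(z) · P_ℓ(z) dz equals 1 when ℓ = 0, and equals η/((4ℓ²−1)(2ℓ+3)) when ℓ ≥ 1. In particular λ_ℓ(η) > 0 for all ℓ. (Eigenvalues of the Lebedev kernel.) -/

import Mathlib

/-- The `ℓ`-th Legendre polynomial (Rodrigues' formula), normalized so that `P_ℓ(1) = 1`. -/
noncomputable def legendreP (ℓ : ℕ) : Polynomial ℝ :=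
  ((1 : ℝ) / (2 ^ ℓ * ℓ.factorial)) • Polynomial.derivative^[ℓ] ((Polynomial.X ^ 2 - 1) ^ ℓ)

/-- The Lebedev univariate kernel function with parameter `η`. -/
noncomputable def lebedevKernelFun (η z : ℝ) : ℝ :=
  (1 / (4 * Real.pi) + η / (12 * Real.pi)) - (η / (8 * Real.pi)) * Real.sqrt ((1 - z) / 2)

/-!
The constant part of `k_η` only sees `∫ P_ℓ`, which vanishes for `ℓ ≥ 1` because
`(2ℓ + 3) P_{ℓ+1} = P'_{ℓ+2} - P'_ℓ` and `P_ℓ(±1) = (±1)^ℓ`.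

For the square-root part, substitute `z = 1 - 2t²` on `t ∈ [0, 1]`: then `√((1 - z)/2) = t` and
`dz = -4t dt`, so `∫ √((1 - z)/2) p(z) dz = 2 Φ((1 - X) p)` with `Φ p = ∫₀¹ p(1 - 2t²) dt`
(`halfChordIntegral`), a functional on polynomials obeying the integration by parts rule
`2 Φ((1 - X) p') = Φ p - p(-1)`.
Applied to the Legendre recurrences it gives `Φ P_ℓ = 1/(2ℓ + 1)` and then
`Φ((1 - X) P_ℓ) = -2/((2ℓ - 1)(2ℓ + 1)(2ℓ + 3))`.
-/

open Polynomial

namespace Polynomial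

variable {R : Type*} [CommRing R]

theorem derivative_X_sq_sub_one_pow_succ (n : ℕ) :
    derivative (((X : R[X]) ^ 2 - 1) ^ (n + 1)) = C (2 * (n + 1 : R)) * ((X ^ 2 - 1) ^ n * X) := by
  rw [derivative_pow, derivative_sub, derivative_X_pow, derivative_one]
  simp only [map_mul, map_add, map_natCast, map_ofNat, map_one]
  push_cast
  ring

theorem iterate_derivative_two_X_sq_sub_one_pow (n : ℕ) :
    derivative^[2] (((X : R[X]) ^ 2 - 1) ^ (n + 2))
      = C (2 * (n + 2 : R)) * (C (2 * n + 3 : R) * (X ^ 2 - 1) ^ (n + 1)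
          + C (2 * (n + 1 : R)) * (X ^ 2 - 1) ^ n) := by
  rw [Function.iterate_succ_apply, Function.iterate_one, derivative_X_sq_sub_one_pow_succ,
    derivative_C_mul, derivative_mul, derivative_X_sq_sub_one_pow_succ, derivative_X]
  simp only [map_mul, map_add, map_natCast, map_ofNat, map_one]
  push_cast
  ring

theorem X_mul_derivative_comp_one_sub_two_X_sq (p : R[X]) :
    X * derivative (p.comp (1 - 2 * X ^ 2))
      = (-2 : R) • ((1 - X) * derivative p).comp (1 - 2 * X ^ 2) := by
  have hu : derivative (1 - 2 * X ^ 2 : R[X]) = -4 * X := by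
    rw [derivative_sub, derivative_one, derivative_mul, derivative_ofNat, derivative_X_sq,
      map_ofNat]
    ring
  rw [derivative_comp, mul_comp, sub_comp, one_comp, X_comp, hu, smul_eq_C_mul, map_neg,
    map_ofNat]
  ring

noncomputable def intervalIntegralₗ (a b : ℝ) : ℝ[X] →ₗ[ℝ] ℝ where
  toFun p := ∫ x in a..b, p.eval x
  map_add' p q := by
    simp only [eval_add]
    exact intervalIntegral.integral_add (p.continuous.intervalIntegrable a b)
      (q.continuous.intervalIntegrable a b)
  map_smul' c p := by
    simp only [eval_smul, smul_eq_mul, RingHom.id_apply]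
    exact intervalIntegral.integral_const_mul c _

theorem intervalIntegralₗ_apply (a b : ℝ) (p : ℝ[X]) :
    intervalIntegralₗ a b p = ∫ x in a..b, p.eval x := rfl

theorem intervalIntegralₗ_derivative (a b : ℝ) (p : ℝ[X]) :
    intervalIntegralₗ a b (derivative p) = p.eval b - p.eval a :=
  intervalIntegral.integral_eq_sub_of_hasDerivAt (fun x _ => p.hasDerivAt x)
    ((derivative p).continuous.intervalIntegrable a b)

theorem intervalIntegralₗ_X_mul_derivative (a b : ℝ) (p : ℝ[X]) :
    intervalIntegralₗ a b (X * derivative p)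
      = b * p.eval b - a * p.eval a - intervalIntegralₗ a b p := by
  have h : X * derivative p = derivative (X * p) - p := by
    rw [derivative_mul, derivative_X, one_mul, add_sub_cancel_left]
  rw [h, map_sub, intervalIntegralₗ_derivative]
  simp

end Polynomial

theorem C_mul_legendreP (ℓ : ℕ) :
    C (2 ^ ℓ * ℓ.factorial : ℝ) * legendreP ℓ = derivative^[ℓ] ((X ^ 2 - 1) ^ ℓ) := by
  have hc : (2 : ℝ) ^ ℓ * ℓ.factorial ≠ 0 := by positivity
  rw [legendreP, smul_eq_C_mul, ← mul_assoc, ← C_mul, one_div, mul_inv_cancel₀ hc, C_1, one_mul]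

@[simp]
theorem legendreP_zero : legendreP 0 = 1 := by
  simp [legendreP]

theorem derivative_legendreP_succ (ℓ : ℕ) :
    derivative (legendreP (ℓ + 1))
      = X * derivative (legendreP ℓ) + ((ℓ : ℝ[X]) + 1) * legendreP ℓ := by
  have key := congrArg derivative (C_mul_legendreP (ℓ + 1))
  rw [← Function.iterate_succ_apply' derivative, Function.iterate_succ_apply,
    derivative_X_sq_sub_one_pow_succ, iterate_derivative_C_mul, iterate_derivative_mul_X,
    Nat.add_sub_cancel, Function.iterate_succ_apply', ← C_mul_legendreP ℓ, derivative_C_mul,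
    derivative_C_mul] at key
  have hc : C (2 ^ (ℓ + 1) * (ℓ + 1).factorial : ℝ) ≠ 0 := by simp [Nat.factorial_ne_zero]
  refine mul_left_cancel₀ hc ?_
  rw [key]
  simp only [Nat.factorial_succ, map_mul, map_pow, map_natCast, map_ofNat, map_add, map_one,
    nsmul_eq_mul]
  push_cast
  ring

theorem derivative_legendreP_add_two (ℓ : ℕ) :
    derivative (legendreP (ℓ + 2))
      = derivative (legendreP ℓ) + (2 * (ℓ : ℝ[X]) + 3) * legendreP (ℓ + 1) := by
  have key := congrArg derivative (C_mul_legendreP (ℓ + 2))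
  rw [← Function.iterate_succ_apply' derivative, show (ℓ + 2).succ = (ℓ + 1) + 2 from rfl,
    Function.iterate_add_apply, iterate_derivative_two_X_sq_sub_one_pow,
    iterate_derivative_C_mul, iterate_map_add, iterate_derivative_C_mul, iterate_derivative_C_mul,
    ← C_mul_legendreP (ℓ + 1), Function.iterate_succ_apply', ← C_mul_legendreP ℓ,
    derivative_C_mul, derivative_C_mul] at key
  have hc : C (2 ^ (ℓ + 2) * (ℓ + 2).factorial : ℝ) ≠ 0 := by simp [Nat.factorial_ne_zero]
  refine mul_left_cancel₀ hc ?_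
  rw [key]
  simp only [Nat.factorial_succ, map_mul, map_pow, map_natCast, map_ofNat, map_add, map_one]
  push_cast
  ring

theorem one_sub_X_mul_derivative_legendreP_succ_add (ℓ : ℕ) :
    (1 - X) * derivative (legendreP (ℓ + 1) + legendreP ℓ)
      = ((ℓ : ℝ[X]) + 1) * (legendreP ℓ - legendreP (ℓ + 1)) := by
  have h := derivative_legendreP_succ (ℓ + 1)
  push_cast at h
  rw [derivative_add]
  linear_combination derivative_legendreP_succ ℓ - derivative_legendreP_add_two ℓ + h

theorem natCast_add_one_mul_legendreP_succ (ℓ : ℕ) :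
    ((ℓ : ℝ[X]) + 1) * legendreP (ℓ + 1)
      = ((ℓ : ℝ[X]) + 1) * X * legendreP ℓ + (X ^ 2 - 1) * derivative (legendreP ℓ) := by
  have h := derivative_legendreP_succ (ℓ + 1)
  push_cast at h
  linear_combination X * derivative_legendreP_succ ℓ - derivative_legendreP_add_two ℓ + h

theorem eval_legendreP_of_sq_eq_one {x : ℝ} (hx : x ^ 2 = 1) (ℓ : ℕ) :
    (legendreP ℓ).eval x = x ^ ℓ := by
  induction ℓ with
  | zero => simp
  | succ ℓ ih =>
    have h := congrArg (eval x) (natCast_add_one_mul_legendreP_succ ℓ)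
    simp only [eval_mul, eval_add, eval_sub, eval_pow, eval_X, eval_one, eval_natCast, hx, ih,
      sub_self, zero_mul, add_zero] at h
    exact mul_left_cancel₀ (by positivity) (h.trans (by ring))

theorem integral_legendreP (ℓ : ℕ) :
    ∫ z in (-1 : ℝ)..1, (legendreP ℓ).eval z = if ℓ = 0 then 2 else 0 := by
  rw [← intervalIntegralₗ_apply]
  cases ℓ with
  | zero => norm_num [intervalIntegralₗ_apply]
  | succ ℓ =>
    have h := congrArg (intervalIntegralₗ (-1) 1) (derivative_legendreP_add_two ℓ)
    rw [map_add, intervalIntegralₗ_derivative, intervalIntegralₗ_derivative,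
      show (2 * (ℓ : ℝ[X]) + 3) = C (2 * ℓ + 3 : ℝ) by
        simp only [map_add, map_mul, map_natCast, map_ofNat],
      C_mul', map_smul, smul_eq_mul] at h
    simp only [eval_legendreP_of_sq_eq_one (one_pow 2),
      eval_legendreP_of_sq_eq_one (show (-1 : ℝ) ^ 2 = 1 by norm_num), pow_add] at h
    norm_num at h
    rw [if_neg ℓ.succ_ne_zero]
    exact h.resolve_left (by positivity)

/-- Under `z = 1 - 2t²`, `t = √((1 - z)/2)` is half the chordal distance between two points of
the unit sphere with inner product `z`. -/
noncomputable def halfChordIntegral : ℝ[X] →ₗ[ℝ] ℝ :=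
  (intervalIntegralₗ 0 1).comp (aeval (1 - 2 * X ^ 2 : ℝ[X])).toLinearMap

theorem halfChordIntegral_apply (p : ℝ[X]) :
    halfChordIntegral p = ∫ t in (0 : ℝ)..1, p.eval (1 - 2 * t ^ 2) := by
  simp [halfChordIntegral, intervalIntegralₗ_apply, ← comp_eq_aeval, eval_comp]

theorem two_mul_halfChordIntegral_one_sub_X_mul_derivative (p : ℝ[X]) :
    2 * halfChordIntegral ((1 - X) * derivative p) = halfChordIntegral p - p.eval (-1) := by
  have h := congrArg (intervalIntegralₗ 0 1) (X_mul_derivative_comp_one_sub_two_X_sq p)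
  have hu : eval 1 (1 - 2 * X ^ 2 : ℝ[X]) = -1 := by norm_num
  rw [intervalIntegralₗ_X_mul_derivative, map_smul, eval_comp, hu, one_mul, zero_mul, sub_zero,
    smul_eq_mul] at h
  simp only [halfChordIntegral, LinearMap.comp_apply, AlgHom.toLinearMap_apply, ← comp_eq_aeval]
  linarith

theorem halfChordIntegral_legendreP_succ (ℓ : ℕ) :
    (2 * ℓ + 3) * halfChordIntegral (legendreP (ℓ + 1))
      = (2 * ℓ + 1) * halfChordIntegral (legendreP ℓ) := by
  have h := congrArg halfChordIntegral (one_sub_X_mul_derivative_legendreP_succ_add ℓ)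
  rw [show ((ℓ : ℝ[X]) + 1) = C ((ℓ : ℝ) + 1) by simp, C_mul', map_smul, map_sub, smul_eq_mul,
    ← (mul_right_inj' two_ne_zero), two_mul_halfChordIntegral_one_sub_X_mul_derivative, map_add,
    eval_add, eval_legendreP_of_sq_eq_one (by norm_num), eval_legendreP_of_sq_eq_one (by norm_num),
    pow_succ] at h
  linarith

theorem halfChordIntegral_legendreP (ℓ : ℕ) :
    halfChordIntegral (legendreP ℓ) = 1 / (2 * ℓ + 1) := by
  induction ℓ with
  | zero => simp [halfChordIntegral_apply]
  | succ ℓ ih =>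
    have h := halfChordIntegral_legendreP_succ ℓ
    rw [ih, mul_one_div_cancel (by positivity)] at h
    rw [eq_div_iff (by positivity)]
    push_cast
    linarith

theorem halfChordIntegral_one_sub_X_mul_legendreP (ℓ : ℕ) :
    halfChordIntegral ((1 - X) * legendreP ℓ)
      = -2 / ((2 * ℓ - 1) * (2 * ℓ + 1) * (2 * ℓ + 3)) := by
  cases ℓ with
  | zero =>
    simp only [legendreP_zero, mul_one, halfChordIntegral_apply, eval_sub, eval_one, eval_X]
    norm_num
  | succ ℓ =>
    have hI : (1 - X) * derivative (legendreP (ℓ + 2) - legendreP ℓ)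
        = C (2 * ℓ + 3 : ℝ) * ((1 - X) * legendreP (ℓ + 1)) := by
      rw [derivative_sub, derivative_legendreP_add_two]
      simp only [map_add, map_mul, map_natCast, map_ofNat]
      ring
    have h : 2 * halfChordIntegral ((1 - X) * derivative (legendreP (ℓ + 2) - legendreP ℓ))
        = 2 * halfChordIntegral (C (2 * ℓ + 3 : ℝ) * ((1 - X) * legendreP (ℓ + 1))) := by
      rw [hI]
    have hm1 : (-1 : ℝ) ^ 2 = 1 := by norm_num
    rw [two_mul_halfChordIntegral_one_sub_X_mul_derivative, map_sub, halfChordIntegral_legendreP,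
      halfChordIntegral_legendreP, eval_sub, eval_legendreP_of_sq_eq_one hm1,
      eval_legendreP_of_sq_eq_one hm1, pow_add, hm1, mul_one, sub_self, sub_zero, C_mul', map_smul,
      smul_eq_mul] at h
    have hD : (2 * ((ℓ + 1 : ℕ) : ℝ) - 1) * (2 * ((ℓ + 1 : ℕ) : ℝ) + 1)
        * (2 * ((ℓ + 1 : ℕ) : ℝ) + 3) = (2 * ℓ + 1) * (2 * ℓ + 3) * (2 * ℓ + 5) := by
      push_cast
      ring
    rw [hD, eq_div_iff (by positivity)]
    push_cast at h
    field_simp at h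
    linear_combination (-1 / 2 : ℝ) * h

theorem integral_neg_one_one_eq_integral_comp {g : ℝ → ℝ} (hg : Continuous g) :
    ∫ z in (-1 : ℝ)..1, g z = 4 * ∫ t in (0 : ℝ)..1, t * g (1 - 2 * t ^ 2) := by
  have h := intervalIntegral.integral_comp_mul_deriv (a := 0) (b := 1)
    (f := fun t => 1 - 2 * t ^ 2) (f' := fun t => -(4 * t))
    (fun t _ => (((hasDerivAt_pow 2 t).const_mul 2).const_sub 1).congr_deriv (by ring))
    (by fun_prop) hg
  norm_num at h
  rw [intervalIntegral.integral_symm (-1) 1, neg_inj] at h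
  rw [← h, ← intervalIntegral.integral_const_mul]
  congr 1 with t
  ring

theorem integral_sqrt_mul_eval (p : ℝ[X]) :
    ∫ z in (-1 : ℝ)..1, √((1 - z) / 2) * p.eval z = 2 * halfChordIntegral ((1 - X) * p) := by
  rw [integral_neg_one_one_eq_integral_comp (by fun_prop), halfChordIntegral_apply,
    ← intervalIntegral.integral_const_mul, ← intervalIntegral.integral_const_mul]
  refine intervalIntegral.integral_congr fun t ht => ?_
  rw [Set.uIcc_of_le zero_le_one] at ht
  have hsqrt : √((1 - (1 - 2 * t ^ 2)) / 2) = t := by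
    rw [show (1 - (1 - 2 * t ^ 2)) / 2 = t ^ 2 by ring, Real.sqrt_sq ht.1]
  simp only [hsqrt, eval_mul, eval_sub, eval_one, eval_X]
  ring

theorem integral_lebedevKernelFun_mul (η : ℝ) {f : ℝ → ℝ} (hf : Continuous f) :
    ∫ z in (-1 : ℝ)..1, lebedevKernelFun η z * f z
      = (1 / (4 * Real.pi) + η / (12 * Real.pi)) * (∫ z in (-1 : ℝ)..1, f z)
        - η / (8 * Real.pi) * ∫ z in (-1 : ℝ)..1, √((1 - z) / 2) * f z := by
  rw [← intervalIntegral.integral_const_mul, ← intervalIntegral.integral_const_mul,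
    ← intervalIntegral.integral_sub (by apply Continuous.intervalIntegrable; fun_prop)
      (by apply Continuous.intervalIntegrable; fun_prop)]
  congr 1 with z
  rw [lebedevKernelFun]
  ring

theorem two_pi_mul_integral_lebedevKernelFun_mul_legendreP (η : ℝ) (ℓ : ℕ) :
    2 * Real.pi * ∫ z in (-1 : ℝ)..1, lebedevKernelFun η z * (legendreP ℓ).eval z
      = if ℓ = 0 then 1 else η / ((4 * (ℓ : ℝ) ^ 2 - 1) * (2 * (ℓ : ℝ) + 3)) := by
  rw [integral_lebedevKernelFun_mul η (legendreP ℓ).continuous, integral_legendreP,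
    integral_sqrt_mul_eval, halfChordIntegral_one_sub_X_mul_legendreP]
  have hπ := Real.pi_pos
  split_ifs with hℓ
  · subst hℓ
    field_simp
    ring
  · have h1 : (1 : ℝ) ≤ ℓ := by exact_mod_cast Nat.one_le_iff_ne_zero.mpr hℓ
    have h2 : (2 * ℓ - 1 : ℝ) ≠ 0 := by linarith
    have h4 : (4 * ℓ ^ 2 - 1 : ℝ) ≠ 0 := by nlinarith
    field_simp
    ring

/-- Eigenvalues of the Lebedev kernel: for `η > 0`, the quantity
`λ_ℓ(η) = 2π ∫_{-1}^{1} k_η(z) P_ℓ(z) dz` equals `1` for `ℓ = 0` and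
`η/((4ℓ²-1)(2ℓ+3))` for `ℓ ≥ 1`; in particular `λ_ℓ(η) > 0` for all `ℓ`. -/
theorem lebedev_eigenvalues (η : ℝ) (hη : 0 < η) (ℓ : ℕ) :
    (2 * Real.pi * ∫ z in (-1 : ℝ)..1, lebedevKernelFun η z * (legendreP ℓ).eval z)
        = (if ℓ = 0 then 1 else η / ((4 * (ℓ : ℝ) ^ 2 - 1) * (2 * (ℓ : ℝ) + 3))) ∧
      0 < 2 * Real.pi * ∫ z in (-1 : ℝ)..1, lebedevKernelFun η z * (legendreP ℓ).eval z := by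
  refine ⟨two_pi_mul_integral_lebedevKernelFun_mul_legendreP η ℓ, ?_⟩
  rw [two_pi_mul_integral_lebedevKernelFun_mul_legendreP]
  split_ifs with hℓ
  · exact one_pos
  · have h1 : (1 : ℝ) ≤ ℓ := by exact_mod_cast Nat.one_le_iff_ne_zero.mpr hℓ
    apply div_pos hη
    nlinarith
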